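/- arXiv:1306.1114 — 2 statements merged into one kernel-verified Lean document; each statement's English description precedes it below -/
import Mathlib

section
/- Let G = (V,E) be a finite loopless directed graph such that (u,v) ∈ E implies (v,u) ∈ E, and let 𝒜(G) be the associated Boolean matrix indexed by V ∪ E. Then the determinantal rank of 𝒜(G) equals |U'| + |E|, where U' is a largest independent set of G (i.e., it equals α(G) + |E|, with α(G) the independence number of G). -/
/-- Entries of a Boolean matrix `A` at the positions in `S` form a fooling set:
`A p.1 q.2 = A q.1 p.2 = 1` holds exactly when the positions coincide. -/
def IsFoolingSet {α β : Type*} (A : Matrix α β Bool) (S : Finset (α × β)) : Prop :=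
  ∀ p ∈ S, ∀ q ∈ S, (A p.1 q.2 = true ∧ A q.1 p.2 = true) ↔ p = q

/-- The fooling set number of a Boolean matrix: the largest cardinality of a fooling set. -/
noncomputable def foolingSetNumber {α β : Type*} (A : Matrix α β Bool) : ℕ :=
  sSup {n | ∃ S : Finset (α × β), IsFoolingSet A S ∧ S.card = n}

/-- A square Boolean matrix is sign-nonsingular if some permutation `τ` picks out all-one
entries, and every permutation doing so has the same sign as `τ`. -/
def SignNonsingular {ι : Type*} [Fintype ι] [DecidableEq ι] (A : Matrix ι ι Bool) : Prop :=
  ∃ τ : Equiv.Perm ι, (∀ i, A i (τ i) = true) ∧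
    ∀ σ : Equiv.Perm ι, (∀ i, A i (σ i) = true) → Equiv.Perm.sign σ = Equiv.Perm.sign τ

/-- The determinantal rank of a Boolean matrix: the size of its largest
sign-nonsingular square submatrix. -/
noncomputable def detRank {α β : Type*} (A : Matrix α β Bool) : ℕ :=
  sSup {k | ∃ r : Fin k → α, ∃ c : Fin k → β,
    Function.Injective r ∧ Function.Injective c ∧ SignNonsingular (A.submatrix r c)}
/-- The Boolean matrix `𝒜(G)` of a symmetric loopless directed graph `G = (V, E)`,
with rows and columns indexed by `V ⊕ E`. -/
def adjMat {V : Type*} [DecidableEq V] (E : Finset (V × V)) :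
    Matrix (V ⊕ {e : V × V // e ∈ E}) (V ⊕ {e : V × V // e ∈ E}) Bool :=
  fun x y =>
    match x, y with
    | Sum.inl u, Sum.inl v => decide (u = v ∨ (u, v) ∈ E)
    | Sum.inl u, Sum.inr e => decide (e.val.1 = u)
    | Sum.inr e, Sum.inl v => decide (e.val.2 = v)
    | Sum.inr e, Sum.inr f => decide (e = f)

section Aux

variable {V : Type*} [DecidableEq V] {E : Finset (V × V)}

lemma adjMat_ll (u v : V) :
    adjMat E (Sum.inl u) (Sum.inl v) = decide (u = v ∨ (u, v) ∈ E) := rfl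

lemma adjMat_lr (u : V) (e : {e : V × V // e ∈ E}) :
    adjMat E (Sum.inl u) (Sum.inr e) = decide (e.val.1 = u) := rfl

lemma adjMat_rl (e : {e : V × V // e ∈ E}) (v : V) :
    adjMat E (Sum.inr e) (Sum.inl v) = decide (e.val.2 = v) := rfl

lemma adjMat_rr (e f : {e : V × V // e ∈ E}) :
    adjMat E (Sum.inr e) (Sum.inr f) = decide (e = f) := rfl

/-- label of a matched pair -/
def pairLabel : (V ⊕ {e : V × V // e ∈ E}) → (V ⊕ {e : V × V // e ∈ E}) → V ⊕ (V × V)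
  | Sum.inl u, Sum.inl v => if u = v then Sum.inl u else Sum.inr (u, v)
  | Sum.inl _, Sum.inr e => Sum.inr e.val
  | Sum.inr e, _ => Sum.inr e.val

lemma pairLabel_classify {x y : V ⊕ {e : V × V // e ∈ E}} (hA : adjMat E x y = true) :
    (∃ u, pairLabel x y = Sum.inl u ∧ x = Sum.inl u ∧ y = Sum.inl u) ∨
    (∃ p, ∃ hp : p ∈ E, pairLabel x y = Sum.inr p ∧
      (x = Sum.inl p.1 ∨ x = Sum.inr ⟨p, hp⟩) ∧
      (y = Sum.inl p.2 ∨ y = Sum.inr ⟨p, hp⟩)) := by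
  cases x with
  | inl u =>
    cases y with
    | inl v =>
      by_cases h : u = v
      · exact Or.inl ⟨u, by simp [pairLabel, h], rfl, by rw [h]⟩
      · rw [adjMat_ll] at hA
        have hE : (u, v) ∈ E := by
          rcases (decide_eq_true_eq.mp hA) with h' | h'
          · exact absurd h' h
          · exact h'
        exact Or.inr ⟨(u, v), hE, by simp [pairLabel, h], Or.inl rfl, Or.inl rfl⟩
    | inr e =>
      rw [adjMat_lr] at hA
      have h1 : e.val.1 = u := decide_eq_true_eq.mp hA
      exact Or.inr ⟨e.val, e.prop, rfl, Or.inl (by rw [h1]), Or.inr (by simp)⟩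
  | inr e =>
    cases y with
    | inl v =>
      rw [adjMat_rl] at hA
      have h2 : e.val.2 = v := decide_eq_true_eq.mp hA
      exact Or.inr ⟨e.val, e.prop, rfl, Or.inr (by simp), Or.inl (by rw [h2])⟩
    | inr f =>
      rw [adjMat_rr] at hA
      have hef : e = f := decide_eq_true_eq.mp hA
      exact Or.inr ⟨e.val, e.prop, rfl, Or.inr (by simp), Or.inr (by rw [← hef])⟩

lemma block_ones {p : V × V} (hp : p ∈ E) {x y : V ⊕ {e : V × V // e ∈ E}}
    (hx : x = Sum.inl p.1 ∨ x = Sum.inr ⟨p, hp⟩)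
    (hy : y = Sum.inl p.2 ∨ y = Sum.inr ⟨p, hp⟩) :
    adjMat E x y = true := by
  rcases hx with hx | hx <;> rcases hy with hy | hy <;> subst hx <;> subst hy <;>
    simp [adjMat_ll, adjMat_lr, adjMat_rl, adjMat_rr]
  exact Or.inr hp

lemma sns_cross {ι : Type*} [Fintype ι] [DecidableEq ι] {A : Matrix ι ι Bool}
    {τ : Equiv.Perm ι} (hτ : ∀ i, A i (τ i) = true)
    (huniq : ∀ σ : Equiv.Perm ι, (∀ i, A i (σ i) = true) →
      Equiv.Perm.sign σ = Equiv.Perm.sign τ)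
    {i j : ι} (hij : i ≠ j) :
    ¬(A i (τ j) = true ∧ A j (τ i) = true) := by
  rintro ⟨h1, h2⟩
  have hall : ∀ l, A l ((τ * Equiv.swap i j) l) = true := by
    intro l
    rcases eq_or_ne l i with rfl | hli
    · simpa [Equiv.Perm.mul_apply, Equiv.swap_apply_left] using h1
    rcases eq_or_ne l j with rfl | hlj
    · simpa [Equiv.Perm.mul_apply, Equiv.swap_apply_right] using h2
    · simpa [Equiv.Perm.mul_apply, Equiv.swap_apply_of_ne_of_ne hli hlj] using hτ l
  have hs := huniq _ hall
  rw [Equiv.Perm.sign_mul, Equiv.Perm.sign_swap hij] at hs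
  have : (-1 : ℤˣ) = 1 := mul_left_cancel (a := Equiv.Perm.sign τ) (by rw [mul_one]; exact hs)
  exact absurd this (by decide)

end Aux

lemma upper_bound {V : Type*} [Fintype V] [DecidableEq V]
    (E : Finset (V × V)) (hloop : ∀ p ∈ E, p.1 ≠ p.2)
    (hsymm : ∀ u v : V, (u, v) ∈ E → (v, u) ∈ E)
    {k : ℕ} (r c : Fin k → V ⊕ {e : V × V // e ∈ E})
    (hr : Function.Injective r) (hc : Function.Injective c)
    (hsns : SignNonsingular ((adjMat E).submatrix r c)) :
    k ≤ sSup {k | ∃ U : Finset V, (∀ u ∈ U, ∀ v ∈ U, (u, v) ∉ E) ∧ U.card = k} + E.card := by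
  classical
  obtain ⟨τ, hτ, huniq⟩ := hsns
  have hA : ∀ i, adjMat E (r i) (c (τ i)) = true := fun i => hτ i
  have hX : ∀ i j : Fin k, i ≠ j →
      ¬(adjMat E (r i) (c (τ j)) = true ∧ adjMat E (r j) (c (τ i)) = true) := by
    intro i j hij h
    exact sns_cross hτ huniq hij h
  set ℓ : Fin k → V ⊕ (V × V) := fun i => pairLabel (r i) (c (τ i)) with hℓ
  have hinj : Function.Injective ℓ := by
    intro i j hl
    by_contra hij
    have hl' : pairLabel (r i) (c (τ i)) = pairLabel (r j) (c (τ j)) := hl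
    rcases pairLabel_classify (hA i) with ⟨u, hui, hxi, hyi⟩ | ⟨p, hp, hpi, hxi, hyi⟩ <;>
      rcases pairLabel_classify (hA j) with ⟨v, hvj, hxj, hyj⟩ | ⟨q, hq, hqj, hxj, hyj⟩
    · rw [hui, hvj] at hl'
      have huv : u = v := by simpa using hl'
      exact hij (hr (by rw [hxi, hxj, huv]))
    · rw [hui, hqj] at hl'
      simp at hl'
    · rw [hpi, hvj] at hl'
      simp at hl'
    · rw [hpi, hqj] at hl'
      have hpq : p = q := by simpa using hl'
      subst hpq
      exact hX i j hij ⟨block_ones hp hxi hyj, block_ones hp hxj hyi⟩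
  have hcard : (Finset.univ.image ℓ).card = k := by
    rw [Finset.card_image_of_injective _ hinj, Finset.card_univ, Fintype.card_fin]
  set T := Finset.univ.image ℓ with hT
  have hTR : T.toRight ⊆ E := by
    intro p hpT
    rw [Finset.mem_toRight] at hpT
    obtain ⟨i, _, hi⟩ := Finset.mem_image.mp hpT
    rcases pairLabel_classify (hA i) with ⟨u, hui, _, _⟩ | ⟨q, hq, hqi, _, _⟩
    · have : (Sum.inl u : V ⊕ (V × V)) = Sum.inr p := by rw [← hui]; exact hi
      simp at this
    · have : (Sum.inr q : V ⊕ (V × V)) = Sum.inr p := by rw [← hqi]; exact hi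
      have hqp : q = p := by simpa using this
      exact hqp ▸ hq
  have hTL : ∀ u ∈ T.toLeft, ∀ v ∈ T.toLeft, (u, v) ∉ E := by
    intro u hu v hv huv
    rw [Finset.mem_toLeft] at hu hv
    obtain ⟨i, _, hi⟩ := Finset.mem_image.mp hu
    obtain ⟨j, _, hj⟩ := Finset.mem_image.mp hv
    have hgeti : r i = Sum.inl u ∧ c (τ i) = Sum.inl u := by
      rcases pairLabel_classify (hA i) with ⟨w, hwi, hxi, hyi⟩ | ⟨q, hq, hqi, _, _⟩
      · have : w = u := by
          have : (Sum.inl w : V ⊕ (V × V)) = Sum.inl u := by rw [← hwi]; exact hi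
          simpa using this
        exact ⟨this ▸ hxi, this ▸ hyi⟩
      · have : (Sum.inr q : V ⊕ (V × V)) = Sum.inl u := by rw [← hqi]; exact hi
        simp at this
    have hgetj : r j = Sum.inl v ∧ c (τ j) = Sum.inl v := by
      rcases pairLabel_classify (hA j) with ⟨w, hwj, hxj, hyj⟩ | ⟨q, hq, hqj, _, _⟩
      · have : w = v := by
          have : (Sum.inl w : V ⊕ (V × V)) = Sum.inl v := by rw [← hwj]; exact hj
          simpa using this
        exact ⟨this ▸ hxj, this ▸ hyj⟩
      · have : (Sum.inr q : V ⊕ (V × V)) = Sum.inl v := by rw [← hqj]; exact hj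
        simp at this
    have hune : u ≠ v := hloop (u, v) huv
    have hijne : i ≠ j := by
      intro h
      apply hune
      have := hgeti.1.symm.trans (h ▸ hgetj.1)
      simpa using this
    apply hX i j hijne
    constructor
    · rw [hgeti.1, hgetj.2, adjMat_ll]
      exact decide_eq_true_eq.mpr (Or.inr huv)
    · rw [hgetj.1, hgeti.2, adjMat_ll]
      exact decide_eq_true_eq.mpr (Or.inr (hsymm u v huv))
  have h1 : T.toLeft.card ≤
      sSup {k | ∃ U : Finset V, (∀ u ∈ U, ∀ v ∈ U, (u, v) ∉ E) ∧ U.card = k} := by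
    apply le_csSup
    · exact ⟨Fintype.card V, by rintro k ⟨U, _, rfl⟩; exact Finset.card_le_univ U⟩
    · exact ⟨T.toLeft, hTL, rfl⟩
  have h2 : T.toRight.card ≤ E.card := Finset.card_le_card hTR
  calc k = T.toLeft.card + T.toRight.card := by
        rw [Finset.card_toLeft_add_card_toRight, hcard]
    _ ≤ _ := Nat.add_le_add h1 h2

lemma lower_bound {V : Type*} [Fintype V] [DecidableEq V]
    (E : Finset (V × V)) (U : Finset V)
    (hU : ∀ u ∈ U, ∀ v ∈ U, (u, v) ∉ E) :
    ∃ r c : Fin (U.card + E.card) → V ⊕ {e : V × V // e ∈ E},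
      Function.Injective r ∧ Function.Injective c ∧
      SignNonsingular ((adjMat E).submatrix r c) := by
  classical
  let g : ({x // x ∈ U} ⊕ {e : V × V // e ∈ E}) → V ⊕ {e : V × V // e ∈ E} :=
    Sum.elim (fun u => Sum.inl u.val) Sum.inr
  have hg : Function.Injective g := by
    rintro (a | a) (b | b) h
    · exact congrArg Sum.inl (Subtype.ext (by simpa [g] using h))
    · simp [g] at h
    · simp [g] at h
    · exact congrArg Sum.inr (by simpa [g] using h)
  let ψ : Fin (U.card + E.card) ≃ ({x // x ∈ U} ⊕ {e : V × V // e ∈ E}) :=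
    finSumFinEquiv.symm.trans (Equiv.sumCongr U.equivFin.symm E.equivFin.symm)
  refine ⟨g ∘ ψ, g ∘ ψ, hg.comp ψ.injective, hg.comp ψ.injective, 1, ?_, ?_⟩
  · intro i
    show adjMat E (g (ψ i)) (g (ψ i)) = true
    rcases g (ψ i) with u | e
    · rw [adjMat_ll]; exact decide_eq_true_eq.mpr (Or.inl rfl)
    · rw [adjMat_rr]; exact decide_eq_true_eq.mpr rfl
  · intro σ hσ
    have hσ' : ∀ i, adjMat E (g (ψ i)) (g (ψ (σ i))) = true := fun i => hσ i
    suffices hσ1 : σ = 1 by rw [hσ1]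
    have key : ∀ i e, ψ i = Sum.inr e → σ i = i := by
      intro i e hi
      by_contra hne
      have h1 : adjMat E (g (ψ i)) (g (ψ (σ i))) = true := hσ' i
      have h2 : adjMat E (g (ψ (σ.symm i))) (g (ψ i)) = true := by
        have := hσ' (σ.symm i)
        rwa [Equiv.apply_symm_apply] at this
      rw [hi] at h1 h2
      rcases hsi : ψ (σ i) with v | f
      · rw [hsi] at h1
        have hv2 : e.val.2 = v.val := by
          rw [show g (Sum.inr e) = Sum.inr e from rfl,
            show g (Sum.inl v) = Sum.inl v.val from rfl, adjMat_rl] at h1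
          exact decide_eq_true_eq.mp h1
        rcases hpi : ψ (σ.symm i) with u | f'
        · rw [hpi] at h2
          have hu1 : e.val.1 = u.val := by
            rw [show g (Sum.inl u) = Sum.inl u.val from rfl,
              show g (Sum.inr e) = Sum.inr e from rfl, adjMat_lr] at h2
            exact decide_eq_true_eq.mp h2
          have hmem : (u.val, v.val) ∈ E := by
            rw [← hu1, ← hv2, Prod.mk.eta]
            exact e.prop
          exact hU u.val u.prop v.val v.prop hmem
        · rw [hpi] at h2
          have hfe : f' = e := by
            rw [show g (Sum.inr f') = Sum.inr f' from rfl,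
              show g (Sum.inr e) = Sum.inr e from rfl, adjMat_rr] at h2
            exact decide_eq_true_eq.mp h2
          have : σ.symm i = i := ψ.injective (by rw [hpi, hfe, hi])
          exact hne (by conv_lhs => rw [← this, Equiv.apply_symm_apply])
      · rw [hsi] at h1
        have hef : e = f := by
          rw [show g (Sum.inr e) = Sum.inr e from rfl,
            show g (Sum.inr f) = Sum.inr f from rfl, adjMat_rr] at h1
          exact decide_eq_true_eq.mp h1
        exact hne (ψ.injective (by rw [hsi, hi, hef]))
    apply Equiv.ext
    intro i
    show σ i = i
    rcases hi : ψ i with u | e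
    · by_contra hne
      have h1 : adjMat E (g (ψ i)) (g (ψ (σ i))) = true := hσ' i
      rw [hi] at h1
      rcases hsi : ψ (σ i) with v | f
      · rw [hsi] at h1
        have : u.val = v.val ∨ (u.val, v.val) ∈ E := by
          rw [show g (Sum.inl u) = Sum.inl u.val from rfl,
            show g (Sum.inl v) = Sum.inl v.val from rfl, adjMat_ll] at h1
          exact decide_eq_true_eq.mp h1
        rcases this with h | h
        · exact hne (ψ.injective (by rw [hsi, hi, Subtype.ext h]))
        · exact hU u.val u.prop v.val v.prop h
      · have := key (σ i) f hsi
        exact hne (σ.injective this)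
    · exact key i e hi


/-- The determinantal rank of `𝒜(G)` equals `α(G) + |E|`, where `α(G)` is the
independence number of `G`. -/
theorem detRank_adjMat {V : Type*} [Fintype V] [DecidableEq V]
    (E : Finset (V × V)) (hloop : ∀ p ∈ E, p.1 ≠ p.2)
    (hsymm : ∀ u v : V, (u, v) ∈ E → (v, u) ∈ E) :
    detRank (adjMat E) =
      sSup {k | ∃ U : Finset V, (∀ u ∈ U, ∀ v ∈ U, (u, v) ∉ E) ∧ U.card = k} + E.card := by
  classical
  have hSAne : {k | ∃ U : Finset V, (∀ u ∈ U, ∀ v ∈ U, (u, v) ∉ E) ∧ U.card = k}.Nonempty :=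
    ⟨0, ∅, by simp, by simp⟩
  have hSAbdd : BddAbove {k | ∃ U : Finset V, (∀ u ∈ U, ∀ v ∈ U, (u, v) ∉ E) ∧ U.card = k} :=
    ⟨Fintype.card V, by rintro k ⟨U, _, rfl⟩; exact Finset.card_le_univ U⟩
  obtain ⟨U, hUind, hUcard⟩ := Nat.sSup_mem hSAne hSAbdd
  obtain ⟨rd, cd, hrd, hcd, hsnsd⟩ := lower_bound E U hUind
  rw [detRank]
  apply le_antisymm
  · have hne : {k | ∃ r : Fin k → V ⊕ {e : V × V // e ∈ E},
        ∃ c : Fin k → V ⊕ {e : V × V // e ∈ E},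
        Function.Injective r ∧ Function.Injective c ∧
        SignNonsingular ((adjMat E).submatrix r c)}.Nonempty :=
      ⟨U.card + E.card, rd, cd, hrd, hcd, hsnsd⟩
    apply csSup_le hne
    rintro k ⟨r, c, hr, hc, hsns⟩
    exact upper_bound E hloop hsymm r c hr hc hsns
  · rw [← hUcard]
    have hbdd : BddAbove {k | ∃ r : Fin k → V ⊕ {e : V × V // e ∈ E},
        ∃ c : Fin k → V ⊕ {e : V × V // e ∈ E},
        Function.Injective r ∧ Function.Injective c ∧
        SignNonsingular ((adjMat E).submatrix r c)} := by
      refine ⟨U.card + E.card, ?_⟩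
      rintro k ⟨r, c, hr, hc, hsns⟩
      have := upper_bound E hloop hsymm r c hr hc hsns
      rwa [← hUcard] at this
    exact le_csSup hbdd ⟨rd, cd, hrd, hcd, hsnsd⟩
end

section
/- Let G = (V,E) be a finite loopless directed graph such that (u,v) ∈ E implies (v,u) ∈ E, let 𝒜(G) be the associated Boolean matrix indexed by V ∪ E, and let k be a natural number. Then G has an independent set of cardinality at least k if and only if the determinantal rank of 𝒜(G) is at least k + |E|, and this holds if and only if the fooling set number of 𝒜(G) is at least k + |E|. -/
/-!
If `U` is independent, the principal submatrix of `𝒜(G)` on `U ∪ E` has the identity as its only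
all-ones permutation: an edge `e = (a, b)` can only be sent to `b` if some vertex row, necessarily
`a`, is sent to `e`, and `a, b ∈ U` is excluded. Hence `detRank ≥ |U| + |E|`. Any
sign-nonsingular submatrix gives a fooling set of the same size, so `foolingSetNumber ≥ detRank`.
Finally the ones of `𝒜(G)` are covered by the all-ones rectangles `{(v, v)}` for vertices `v` and
`{a, e} × {b, e}` for edges `e = (a, b)`; a fooling set meets each rectangle at most once, and the
vertices `v` whose rectangle it meets are independent by symmetry and looplessness.
-/

open Finset

section BooleanMatrix

variable {α β : Type*} {A : Matrix α β Bool}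

theorem IsFoolingSet.apply_eq_true {S : Finset (α × β)} (hS : IsFoolingSet A S) {p : α × β}
    (hp : p ∈ S) : A p.1 p.2 = true :=
  ((hS p hp p hp).2 rfl).1

theorem isFoolingSet_empty : IsFoolingSet A ∅ := by
  simp [IsFoolingSet]

/-- The hypothesis on `f` says that its fibres on the 1-entries of `A` are all-ones rectangles. -/
theorem IsFoolingSet.injOn_of_rectangleCover {γ : Type*} {S : Finset (α × β)}
    (hS : IsFoolingSet A S) {f : α × β → γ}
    (hf : ∀ p q, A p.1 p.2 = true → A q.1 q.2 = true → f p = f q →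
      A p.1 q.2 = true ∧ A q.1 p.2 = true) :
    Set.InjOn f S := fun p hp q hq hpq =>
  (hS p hp q hq).1 (hf p q (hS.apply_eq_true hp) (hS.apply_eq_true hq) hpq)

theorem IsFoolingSet.map_submatrix {ι κ : Type*} {r : ι ↪ α} {c : κ ↪ β} {S : Finset (ι × κ)}
    (hS : IsFoolingSet (A.submatrix r c) S) : IsFoolingSet A (S.map (r.prodMap c)) := by
  simp only [IsFoolingSet, mem_map, forall_exists_index, and_imp]
  rintro _ p hp rfl _ q hq rfl
  rw [(r.prodMap c).injective.eq_iff]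
  exact hS p hp q hq

/-- The entries `(i, τ i)` of a witness `τ` form a fooling set: crossing ones at `(i, τ j)` and
`(j, τ i)` would give the all-ones permutation `τ * swap i j` of the opposite sign. -/
theorem SignNonsingular.exists_isFoolingSet {ι : Type*} [Fintype ι] [DecidableEq ι]
    {B : Matrix ι ι Bool} (hB : SignNonsingular B) :
    ∃ S : Finset (ι × ι), IsFoolingSet B S ∧ S.card = Fintype.card ι := by
  obtain ⟨τ, hτ, huniq⟩ := hB
  have hgraph : Function.Injective fun i => (i, τ i) := fun i j h => congrArg Prod.fst h
  refine ⟨univ.image fun i => (i, τ i), ?_, card_image_of_injective _ hgraph⟩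
  simp only [IsFoolingSet, mem_image, mem_univ, true_and, forall_exists_index]
  rintro _ i rfl _ j rfl
  refine ⟨fun ⟨hij, hji⟩ => ?_, fun h => hgraph.eq_iff.1 h ▸ ⟨hτ i, hτ i⟩⟩
  by_contra hne
  have hswap : ∀ l, B l ((τ * Equiv.swap i j) l) = true := by
    intro l
    simp only [Equiv.Perm.mul_apply, Equiv.swap_apply_def]
    split_ifs with hli hlj
    · exact hli ▸ hij
    · exact hlj ▸ hji
    · exact hτ l
  have hsign := huniq _ hswap
  rw [Equiv.Perm.sign_mul, Equiv.Perm.sign_swap fun h => hne (by rw [h]), mul_neg_one] at hsign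
  exact neg_units_ne_self _ hsign

theorem signNonsingular_of_forall_eq_one {ι : Type*} [Fintype ι] [DecidableEq ι]
    {B : Matrix ι ι Bool} (hdiag : ∀ i, B i i = true)
    (huniq : ∀ σ : Equiv.Perm ι, (∀ i, B i (σ i) = true) → σ = 1) : SignNonsingular B :=
  ⟨1, hdiag, fun σ hσ => by rw [huniq σ hσ]⟩

theorem SignNonsingular.submatrix_equiv {ι κ : Type*} [Fintype ι] [DecidableEq ι] [Fintype κ]
    [DecidableEq κ] {B : Matrix ι ι Bool} (hB : SignNonsingular B) (e : κ ≃ ι) :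
    SignNonsingular (B.submatrix e e) := by
  obtain ⟨τ, hτ, huniq⟩ := hB
  refine ⟨e.symm.permCongr τ, fun i => by simpa [Equiv.permCongr_apply] using hτ (e i),
    fun σ hσ => ?_⟩
  have hsign := huniq (e.permCongr σ) fun i => by
    simpa [Equiv.permCongr_apply] using hσ (e.symm i)
  rw [Equiv.Perm.sign_permCongr]
  rwa [Equiv.Perm.sign_permCongr] at hsign

section Finite

variable [Fintype α]

theorem SignNonsingular.card_le_detRank {ι : Type*} [Fintype ι] [DecidableEq ι] {r : ι → α}
    {c : ι → β} (hr : Function.Injective r) (hc : Function.Injective c)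
    (h : SignNonsingular (A.submatrix r c)) : Fintype.card ι ≤ detRank A := by
  let e := (Fintype.equivFin ι).symm
  refine le_csSup (⟨Fintype.card α, ?_⟩ : BddAbove _)
    ⟨r ∘ e, c ∘ e, hr.comp e.injective, hc.comp e.injective, h.submatrix_equiv e⟩
  rintro _ ⟨r, -, hr, -, -⟩
  simpa using Fintype.card_le_of_injective r hr

variable [Fintype β]

theorem bddAbove_foolingSetCards :
    BddAbove {n | ∃ S : Finset (α × β), IsFoolingSet A S ∧ S.card = n} :=
  ⟨Fintype.card (α × β), by rintro _ ⟨S, -, rfl⟩; exact S.card_le_univ⟩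

theorem IsFoolingSet.card_le_foolingSetNumber {S : Finset (α × β)} (hS : IsFoolingSet A S) :
    S.card ≤ foolingSetNumber A :=
  le_csSup bddAbove_foolingSetCards ⟨S, hS, rfl⟩

theorem exists_isFoolingSet_card_eq_foolingSetNumber (A : Matrix α β Bool) :
    ∃ S : Finset (α × β), IsFoolingSet A S ∧ S.card = foolingSetNumber A :=
  Nat.sSup_mem (s := {n | ∃ S : Finset (α × β), IsFoolingSet A S ∧ S.card = n})
    ⟨0, ∅, isFoolingSet_empty, rfl⟩ bddAbove_foolingSetCards

theorem detRank_le_foolingSetNumber (A : Matrix α β Bool) : detRank A ≤ foolingSetNumber A := by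
  refine csSup_le' ?_
  rintro n ⟨r, c, hr, hc, h⟩
  obtain ⟨S, hS, hcard⟩ := h.exists_isFoolingSet
  simpa [hcard] using (hS.map_submatrix (r := ⟨r, hr⟩) (c := ⟨c, hc⟩)).card_le_foolingSetNumber

end Finite

end BooleanMatrix

section AdjMat

variable {V : Type*} [DecidableEq V] {E : Finset (V × V)}

theorem adjMat_eq_true_of_mem_block {e : E} {x y : V ⊕ E}
    (hx : x = .inl e.1.1 ∨ x = .inr e) (hy : y = .inl e.1.2 ∨ y = .inr e) :
    adjMat E x y = true := by
  rcases hx with rfl | rfl <;> rcases hy with rfl | rfl <;> simp [adjMat]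

/-- Labels the all-ones rectangles covering the ones of `adjMat E`: the diagonal entry of a
vertex `v` gets `inl v`, and the `2 × 2` block with rows `e.1, e` and columns `e.2, e` of an edge
`e` gets `inr e`. -/
def adjMatBlock (E : Finset (V × V)) : (V ⊕ E) × (V ⊕ E) → V ⊕ E
  | (.inl u, .inl v) => if h : (u, v) ∈ E then .inr ⟨(u, v), h⟩ else .inl u
  | (.inl _, .inr e) => .inr e
  | (.inr e, _) => .inr e

theorem eq_of_adjMatBlock_eq_inl {p : (V ⊕ E) × (V ⊕ E)} (hp : adjMat E p.1 p.2 = true) {u : V}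
    (hu : adjMatBlock E p = .inl u) : p = (.inl u, .inl u) := by
  rcases p with ⟨a | a, b | b⟩ <;> simp only [adjMatBlock] at hu
  · split_ifs at hu with h
    simp only [adjMat, h, or_false, decide_eq_true_eq] at hp
    obtain rfl := Sum.inl_injective hu
    rw [hp]
  all_goals simp at hu

theorem mem_block_of_adjMatBlock_eq_inr {p : (V ⊕ E) × (V ⊕ E)} (hp : adjMat E p.1 p.2 = true)
    {e : E} (he : adjMatBlock E p = .inr e) :
    (p.1 = .inl e.1.1 ∨ p.1 = .inr e) ∧ (p.2 = .inl e.1.2 ∨ p.2 = .inr e) := by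
  rcases p with ⟨a | a, b | b⟩ <;> simp only [adjMatBlock] at he
  · split_ifs at he with h
    obtain rfl := Sum.inr_injective he
    simp
  all_goals
    obtain rfl := Sum.inr_injective he
    simp_all [adjMat]

theorem adjMat_cross_eq_true_of_adjMatBlock_eq (p q : (V ⊕ E) × (V ⊕ E))
    (hp : adjMat E p.1 p.2 = true) (hq : adjMat E q.1 q.2 = true)
    (hpq : adjMatBlock E p = adjMatBlock E q) :
    adjMat E p.1 q.2 = true ∧ adjMat E q.1 p.2 = true := by
  rcases hb : adjMatBlock E p with u | e
  · obtain rfl := eq_of_adjMatBlock_eq_inl hp hb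
    obtain rfl := eq_of_adjMatBlock_eq_inl hq (hpq ▸ hb)
    exact ⟨hp, hp⟩
  · obtain ⟨hp₁, hp₂⟩ := mem_block_of_adjMatBlock_eq_inr hp hb
    obtain ⟨hq₁, hq₂⟩ := mem_block_of_adjMatBlock_eq_inr hq (hpq ▸ hb)
    exact ⟨adjMat_eq_true_of_mem_block hp₁ hq₂, adjMat_eq_true_of_mem_block hq₁ hp₂⟩

theorem exists_indep_card_add_le_of_isFoolingSet (hloop : ∀ p ∈ E, p.1 ≠ p.2)
    (hsymm : ∀ u v : V, (u, v) ∈ E → (v, u) ∈ E) {S : Finset ((V ⊕ E) × (V ⊕ E))}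
    (hS : IsFoolingSet (adjMat E) S) :
    ∃ U : Finset V, (∀ u ∈ U, ∀ v ∈ U, (u, v) ∉ E) ∧ S.card ≤ U.card + E.card := by
  set W := S.image (adjMatBlock E)
  have hdiag : ∀ u ∈ W.toLeft, ((.inl u, .inl u) : (V ⊕ E) × (V ⊕ E)) ∈ S := by
    intro u hu
    obtain ⟨p, hp, hpu⟩ := mem_image.1 (mem_toLeft.1 hu)
    rwa [← eq_of_adjMatBlock_eq_inl (hS.apply_eq_true hp) hpu]
  refine ⟨W.toLeft, fun u hu v hv huv => ?_, ?_⟩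
  · have huv' := (hS _ (hdiag u hu) _ (hdiag v hv)).1
      ⟨by simp [adjMat, huv], by simp [adjMat, hsymm u v huv]⟩
    exact hloop _ huv (by simpa using huv')
  · calc S.card = W.card :=
          (card_image_of_injOn
            (hS.injOn_of_rectangleCover adjMat_cross_eq_true_of_adjMatBlock_eq)).symm
      _ = W.toLeft.card + W.toRight.card := card_toLeft_add_card_toRight.symm
      _ ≤ W.toLeft.card + E.card := by
          grw [W.toRight.card_le_univ, Fintype.card_coe]

theorem perm_eq_one_of_forall_adjMat_eq_true {U : Finset V}
    (hU : ∀ u ∈ U, ∀ v ∈ U, (u, v) ∉ E) {σ : Equiv.Perm (U ⊕ E)}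
    (hσ : ∀ x, adjMat E (Sum.map (↑) id x) (Sum.map (↑) id (σ x)) = true) : σ = 1 := by
  have hrow : ∀ e (v : U), σ (.inr e) = .inl v → e.1.2 = v := fun e v h => by
    simpa [h, adjMat] using hσ (.inr e)
  have hcol : ∀ e (u : U), σ (.inl u) = .inr e → e.1.1 = u := fun e u h => by
    simpa [h, adjMat] using hσ (.inl u)
  have hfix : ∀ e f, σ (.inr e) = .inr f → e = f := fun e f h => by
    simpa [h, adjMat] using hσ (.inr e)
  have hedge : ∀ e, σ (.inr e) = .inr e := by
    intro e
    rcases hx : σ (.inr e) with v | f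
    · exfalso
      rcases hy : σ.symm (.inr e) with u | f
      · have hu := hcol e u (by rw [← hy, σ.apply_symm_apply])
        exact hU u u.2 v v.2 (hu ▸ hrow e v hx ▸ e.2)
      · obtain rfl := hfix f e (by rw [← hy, σ.apply_symm_apply])
        rw [σ.symm_apply_eq] at hy
        simp [← hy] at hx
    · rw [hfix e f hx]
  have hvert : ∀ u, σ (.inl u) = .inl u := by
    intro u
    rcases hx : σ (.inl u) with v | f
    · have huv := hσ (.inl u)
      simp only [hx, Sum.map_inl, adjMat, decide_eq_true_eq] at huv
      rcases huv with huv | huv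
      · rw [Subtype.ext huv]
      · exact absurd huv (hU _ u.2 _ v.2)
    · simpa using σ.injective (hx.trans (hedge f).symm)
  ext1 x
  rcases x with u | e
  exacts [hvert u, hedge e]

theorem card_add_card_le_detRank_adjMat [Fintype V] {U : Finset V}
    (hU : ∀ u ∈ U, ∀ v ∈ U, (u, v) ∉ E) : U.card + E.card ≤ detRank (adjMat E) := by
  have hemb : Function.Injective (Sum.map (↑) id : U ⊕ E → V ⊕ E) :=
    Subtype.val_injective.sumMap Function.injective_id
  have hdiag : ∀ x : U ⊕ E, adjMat E (Sum.map (↑) id x) (Sum.map (↑) id x) = true := by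
    rintro (u | e) <;> simp [adjMat]
  simpa using (signNonsingular_of_forall_eq_one hdiag
    fun _ => perm_eq_one_of_forall_adjMat_eq_true hU).card_le_detRank hemb hemb

end AdjMat

/-- `G` has an independent set of cardinality at least `k` iff the determinantal rank of
`𝒜(G)` is at least `k + |E|`, iff the fooling set number of `𝒜(G)` is at least `k + |E|`. -/
theorem indepSet_iff_detRank_iff_foolingSetNumber {V : Type*} [Fintype V] [DecidableEq V]
    (E : Finset (V × V)) (hloop : ∀ p ∈ E, p.1 ≠ p.2)
    (hsymm : ∀ u v : V, (u, v) ∈ E → (v, u) ∈ E) (k : ℕ) :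
    ((∃ U : Finset V, (∀ u ∈ U, ∀ v ∈ U, (u, v) ∉ E) ∧ k ≤ U.card) ↔
        k + E.card ≤ detRank (adjMat E)) ∧
      (k + E.card ≤ detRank (adjMat E) ↔ k + E.card ≤ foolingSetNumber (adjMat E)) := by
  have hdet : (∃ U : Finset V, (∀ u ∈ U, ∀ v ∈ U, (u, v) ∉ E) ∧ k ≤ U.card) →
      k + E.card ≤ detRank (adjMat E) := fun ⟨U, hU, hk⟩ =>
    (Nat.add_le_add_right hk _).trans (card_add_card_le_detRank_adjMat hU)
  have hindep : k + E.card ≤ foolingSetNumber (adjMat E) →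
      ∃ U : Finset V, (∀ u ∈ U, ∀ v ∈ U, (u, v) ∉ E) ∧ k ≤ U.card := by
    intro hk
    obtain ⟨S, hS, hcard⟩ := exists_isFoolingSet_card_eq_foolingSetNumber (adjMat E)
    obtain ⟨U, hU, hSU⟩ := exists_indep_card_add_le_of_isFoolingSet hloop hsymm hS
    exact ⟨U, hU, by omega⟩
  have hfool := detRank_le_foolingSetNumber (adjMat E)
  exact ⟨⟨hdet, fun h => hindep (h.trans hfool)⟩, fun h => h.trans hfool, fun h => hdet (hindep h)⟩
end
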